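/- arXiv:2206.01260 — 3 statements merged into one kernel-verified Lean document; each statement's English description precedes it below -/
import Mathlib

section
/- Let P and Q be probability measures on ℝⁿ and let 1 ≤ k ≤ n. For S ⊆ {1,…,n}, let P_S and Q_S denote the marginal laws of the coordinates indexed by S under P and Q respectively. Then the average over all k-element subsets S of {1,…,n} of W₂²(P_S, Q_S), i.e. C(n,k)⁻¹ Σ_{S ⊆ [n], |S| = k} W₂²(P_S, Q_S), is at most (1/⌊n/k⌋) · W₂²(P, Q). -/
/-! Restricting a coupling of `P` and `Q` to the coordinates in `S` gives a coupling of `P_S` and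
`Q_S` whose cost is the part of the total cost carried by those coordinates. Summing over all
`k`-subsets `S` counts every coordinate `C(n-1, k-1)` times, and
`C(n-1, k-1) / C(n, k) = k / n ≤ 1 / ⌊n/k⌋`. -/

open MeasureTheory Real Filter Topology
open scoped ENNReal NNReal BigOperators Classical

noncomputable section

/-- The squared quadratic Wasserstein distance with cost `c` (the squared distance),
defined as the infimum over couplings of `μ` and `ν`, valued in `[0,∞]`. -/
def W2sq {α : Type*} [MeasurableSpace α] (c : α → α → ℝ) (μ ν : Measure α) : ℝ≥0∞ :=
  ⨅ (cpl : Measure (α × α)) (_ : cpl.map Prod.fst = μ) (_ : cpl.map Prod.snd = ν),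
    ∫⁻ p, ENNReal.ofReal (c p.1 p.2) ∂cpl

namespace Finset

variable {ι M : Type*} [DecidableEq ι] [AddCommMonoid M]

theorem card_filter_mem_powersetCard {s : Finset ι} {i : ι} (hi : i ∈ s) {k : ℕ} (hk : 1 ≤ k) :
    #{S ∈ s.powersetCard k | i ∈ S} = (#s - 1).choose (k - 1) := by
  simpa only [singleton_subset_iff, card_singleton] using
    card_filter_powersetCard_subset {i} s k (singleton_subset_iff.2 hi) hk

theorem sum_powersetCard_sum (s : Finset ι) {k : ℕ} (hk : 1 ≤ k) (f : ι → M) :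
    ∑ S ∈ s.powersetCard k, ∑ i ∈ S, f i = (#s - 1).choose (k - 1) • ∑ i ∈ s, f i := by
  rw [sum_comm' (t' := s) (s' := fun i => {S ∈ s.powersetCard k | i ∈ S}), smul_sum]
  · refine sum_congr rfl fun i hi => ?_
    rw [sum_const, card_filter_mem_powersetCard hi hk]
  · intro S i
    simp only [mem_powersetCard, mem_filter]
    exact ⟨fun ⟨⟨hSs, hSk⟩, hiS⟩ => ⟨⟨⟨hSs, hSk⟩, hiS⟩, hSs hiS⟩, fun h => ⟨h.1.1, h.1.2⟩⟩

end Finset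

theorem Nat.div_mul_choose_pred_le (n k : ℕ) : n / k * (n - 1).choose (k - 1) ≤ n.choose k := by
  rcases Nat.eq_zero_or_pos k with rfl | hk
  · simp
  have hmul : n * (n - 1).choose (k - 1) = n.choose k * k := by
    obtain ⟨k, rfl⟩ : ∃ k', k = k' + 1 := ⟨k - 1, by omega⟩
    rcases n with _ | n
    · simp
    · simpa using Nat.add_one_mul_choose_eq n k
  refine Nat.le_of_mul_le_mul_right ?_ hk
  calc n / k * (n - 1).choose (k - 1) * k = n / k * k * (n - 1).choose (k - 1) := by ring
    _ ≤ n * (n - 1).choose (k - 1) := by gcongr; exact Nat.div_mul_le_self n k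
    _ = n.choose k * k := hmul

theorem ENNReal.inv_choose_mul_choose_pred_le {n k : ℕ} (hkn : k ≤ n) :
    ((n.choose k : ℝ≥0∞))⁻¹ * (n - 1).choose (k - 1) ≤ ((n / k : ℕ) : ℝ≥0∞)⁻¹ := by
  have hchoose : (n.choose k : ℝ≥0∞) ≠ 0 := by exact_mod_cast (Nat.choose_pos hkn).ne'
  rw [ENNReal.le_inv_iff_mul_le, mul_assoc,
    ← ENNReal.inv_mul_cancel hchoose (ENNReal.natCast_ne_top _)]
  gcongr
  exact_mod_cast (mul_comm _ _).trans_le (Nat.div_mul_choose_pred_le n k)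

section Coupling

variable {α β : Type*} [MeasurableSpace α] [MeasurableSpace β]

theorem W2sq_le_lintegral (c : α → α → ℝ) {γ : Measure (α × α)} :
    W2sq c (γ.map Prod.fst) (γ.map Prod.snd) ≤ ∫⁻ p, ENNReal.ofReal (c p.1 p.2) ∂γ :=
  iInf_le_of_le γ <| iInf_le_of_le rfl <| iInf_le _ rfl

theorem W2sq_map_le_lintegral (c : β → β → ℝ) {f : α → β} (hf : Measurable f)
    {γ : Measure (α × α)} :
    W2sq c ((γ.map Prod.fst).map f) ((γ.map Prod.snd).map f)
      ≤ ∫⁻ p, ENNReal.ofReal (c (f p.1) (f p.2)) ∂γ := by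
  have hff : Measurable (Prod.map f f) := hf.prodMap hf
  rw [Measure.map_map hf measurable_fst, Measure.map_map hf measurable_snd]
  change W2sq c (γ.map (Prod.fst ∘ Prod.map f f)) (γ.map (Prod.snd ∘ Prod.map f f)) ≤ _
  rw [← Measure.map_map measurable_fst hff, ← Measure.map_map measurable_snd hff]
  exact (W2sq_le_lintegral c).trans (lintegral_map_le _ _)

theorem le_mul_W2sq_of_forall_coupling (c : α → α → ℝ) {μ ν : Measure α} {a b : ℝ≥0∞}
    (hb₀ : b ≠ 0) (hb : b ≠ ∞)
    (h : ∀ γ : Measure (α × α), γ.map Prod.fst = μ → γ.map Prod.snd = ν →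
      a ≤ b * ∫⁻ p, ENNReal.ofReal (c p.1 p.2) ∂γ) :
    a ≤ b * W2sq c μ ν := by
  simp only [W2sq, ENNReal.mul_iInf_of_ne hb₀ hb]
  exact le_iInf fun γ => le_iInf fun hμ => le_iInf fun hν => h γ hμ hν

end Coupling

theorem ENNReal.ofReal_sum_subtype_sq_sub {ι : Type*} (x y : ι → ℝ) (S : Finset ι) :
    ENNReal.ofReal (∑ j : S, (x j - y j) ^ 2) = ∑ i ∈ S, ENNReal.ofReal ((x i - y i) ^ 2) := by
  rw [ENNReal.ofReal_sum_of_nonneg fun _ _ => sq_nonneg _,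
    Finset.sum_coe_sort S fun i => ENNReal.ofReal ((x i - y i) ^ 2)]

theorem stmt_8_general (n k : ℕ) (hk1 : 1 ≤ k) (hkn : k ≤ n)
    (P Q : Measure (Fin n → ℝ)) :
    ((n.choose k : ℝ≥0∞))⁻¹ *
      ∑ S ∈ Finset.powersetCard k (Finset.univ : Finset (Fin n)),
        W2sq (fun u v : {a // a ∈ S} → ℝ => ∑ j, (u j - v j) ^ 2)
          (P.map fun x (j : {a // a ∈ S}) => x j.1)
          (Q.map fun x (j : {a // a ∈ S}) => x j.1)
      ≤ ((n / k : ℕ) : ℝ≥0∞)⁻¹ *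
        W2sq (fun x y : Fin n → ℝ => ∑ i, (x i - y i) ^ 2) P Q := by
  have hq : n / k ≠ 0 := (Nat.div_pos hkn hk1).ne'
  refine le_mul_W2sq_of_forall_coupling _ (by simp) (by simpa using hq) fun γ hP hQ => ?_
  subst hP hQ
  calc _ ≤ ((n.choose k : ℝ≥0∞))⁻¹ * ∑ S ∈ Finset.powersetCard k Finset.univ,
        ∫⁻ p, ∑ i ∈ S, ENNReal.ofReal ((p.1 i - p.2 i) ^ 2) ∂γ := by
        gcongr with S
        exact (W2sq_map_le_lintegral _ (f := fun (x : Fin n → ℝ) (j : {a // a ∈ S}) => x j.1)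
          (by fun_prop)).trans_eq
          (lintegral_congr fun p => ENNReal.ofReal_sum_subtype_sq_sub p.1 p.2 S)
    _ = ((n.choose k : ℝ≥0∞))⁻¹ * (n - 1).choose (k - 1) *
        ∫⁻ p, ∑ i, ENNReal.ofReal ((p.1 i - p.2 i) ^ 2) ∂γ := by
        rw [← lintegral_finsetSum, mul_assoc,
          ← lintegral_const_mul' _ _ (ENNReal.natCast_ne_top _)]
        · simp only [Finset.sum_powersetCard_sum _ hk1, nsmul_eq_mul, Finset.card_univ,
            Fintype.card_fin]
        · intro S _
          fun_prop
    _ ≤ ((n / k : ℕ) : ℝ≥0∞)⁻¹ * ∫⁻ p, ENNReal.ofReal (∑ i, (p.1 i - p.2 i) ^ 2) ∂γ := by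
        simp only [ENNReal.ofReal_sum_of_nonneg fun _ _ => sq_nonneg _]
        gcongr
        exact ENNReal.inv_choose_mul_choose_pred_le hkn

/-- the average over all `k`-element subsets `S` of `[n]` of
`W₂²(P_S, Q_S)` is at most `W₂²(P,Q)/⌊n/k⌋`. -/
theorem stmt_8 (n k : ℕ) (hk1 : 1 ≤ k) (hkn : k ≤ n)
    (P Q : Measure (Fin n → ℝ)) [IsProbabilityMeasure P] [IsProbabilityMeasure Q] :
    ((n.choose k : ℝ≥0∞))⁻¹ *
      ∑ S ∈ Finset.powersetCard k (Finset.univ : Finset (Fin n)),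
        W2sq (fun u v : {a // a ∈ S} → ℝ => ∑ j, (u j - v j) ^ 2)
          (P.map fun x (j : {a // a ∈ S}) => x j.1)
          (Q.map fun x (j : {a // a ∈ S}) => x j.1)
      ≤ ((n / k : ℕ) : ℝ≥0∞)⁻¹ *
        W2sq (fun x y : Fin n → ℝ => ∑ i, (x i - y i) ^ 2) P Q :=
  stmt_8_general n k hk1 hkn P Q

end
end

section
/- Let f : ℝⁿ → ℝ ∪ {−∞} be measurable and bounded from above with Z := ∫_{ℝⁿ} e^f dx ∈ (0, ∞), and define P(dx) = Z⁻¹e^{f(x)}dx. Then sup over all probability measures Q on ℝⁿ of (∫ f dQ − H(Q)) = log Z ∈ (−∞, ∞), and the following are equivalent: (1) H(P) < ∞; (2) the supremum is attained uniquely by P; (3) there exists a maximizer. -/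
open MeasureTheory Real Filter Topology
open scoped ENNReal NNReal BigOperators Classical

noncomputable section

/-- The exponential of an extended real number, valued in `ℝ≥0∞`. -/
def expE (z : EReal) : ℝ≥0∞ :=
  if z = ⊥ then 0 else if z = ⊤ then ⊤ else ENNReal.ofReal (Real.exp z.toReal)

/-- The positive part of an extended real number, valued in `ℝ≥0∞`. -/
def ePos (z : EReal) : ℝ≥0∞ := if z = ⊤ then ⊤ else ENNReal.ofReal z.toReal

/-- The integral `∫ f dQ` of an `(ℝ ∪ {±∞})`-valued function, with values in the
extended reals (well-defined in `[−∞, ∞)` when `f` is bounded above). -/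
def intEE {α : Type*} [MeasurableSpace α] (f : α → EReal) (Q : Measure α) : EReal :=
  ((∫⁻ x, ePos (f x) ∂Q : ℝ≥0∞) : EReal) - ((∫⁻ x, ePos (-f x) ∂Q : ℝ≥0∞) : EReal)

/-- The (negative) differential entropy `H(Q) = ∫ Q(x) log Q(x) dx`, `= ∞` if `Q` is not
absolutely continuous or the negative part of `Q log Q` is not integrable. -/
def Hent {α : Type*} [MeasureSpace α] (Q : Measure α) : EReal :=
  if Q ≪ (volume : Measure α) ∧
      Integrable (fun x =>
        min ((Q.rnDeriv volume x).toReal * Real.log (Q.rnDeriv volume x).toReal) 0)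
        (volume : Measure α) then
    ((∫⁻ x, ENNReal.ofReal
        ((Q.rnDeriv volume x).toReal * Real.log (Q.rnDeriv volume x).toReal)
        ∂(volume : Measure α) : ℝ≥0∞) : EReal)
      + ((∫ x, min ((Q.rnDeriv volume x).toReal * Real.log (Q.rnDeriv volume x).toReal) 0
          ∂(volume : Measure α) : ℝ) : EReal)
  else ⊤

/-!
Write `q = e^f / Z` for the density of `P`. The objective `∫ f dQ - H(Q)` is `-∞` unless
`Q = ρ dx` with `H(Q) < ∞` and `f ∈ L¹(Q)`. For such `Q` the pointwise identity
`ρ f - ρ log ρ = ρ log Z - q klFun (ρ / q) + q - ρ`, where `klFun t = t log t + 1 - t ≥ 0`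
vanishes only at `t = 1`, integrates to `∫ f dQ - H(Q) = log Z - ∫ q klFun (ρ / q)`: `log Z`
minus the relative entropy of `Q` with respect to `P`. Hence the objective is at most `log Z`,
with equality only for `Q = P`. Conversely, `P` conditioned on `{f ≥ -k}` has a bounded density
supported on a set of finite volume, and objective `log Z + log P(f ≥ -k) → log Z`.
-/

open InformationTheory

lemma expE_coe (x : ℝ) : expE x = ENNReal.ofReal (exp x) := by
  simp [expE]

lemma monotone_expE : Monotone expE := by
  intro z w hzw
  induction z using EReal.rec with
  | bot => simp [expE]
  | top => rw [top_le_iff.1 hzw]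
  | coe x =>
    induction w using EReal.rec with
    | bot => exact absurd hzw (by simp)
    | top => simp [expE]
    | coe y =>
      simp only [expE_coe]
      exact ENNReal.ofReal_le_ofReal (exp_le_exp.2 (EReal.coe_le_coe_iff.1 hzw))

lemma expE_ne_top {z : EReal} (hz : z ≠ ⊤) : expE z ≠ ⊤ := by
  unfold expE
  split_ifs <;> simp

lemma measurable_expE : Measurable expE := by
  unfold expE
  refine Measurable.ite (measurableSet_singleton _) measurable_const ?_
  refine Measurable.ite (measurableSet_singleton _) measurable_const ?_
  exact (measurable_exp.comp measurable_ereal_toReal).ennreal_ofReal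

lemma ePos_of_ne_top {z : EReal} (hz : z ≠ ⊤) : ePos z = ENNReal.ofReal z.toReal := by
  simp [ePos, hz]

lemma ePos_neg_of_ne_bot {z : EReal} (hz : z ≠ ⊥) : ePos (-z) = ENNReal.ofReal (-z.toReal) := by
  rw [ePos_of_ne_top (by simpa using hz), EReal.toReal_neg_eq]

lemma ENNReal.ofReal_neg_min_zero (t : ℝ) : ENNReal.ofReal (-min t 0) = ENNReal.ofReal (-t) := by
  rcases le_total t 0 with h | h <;> simp [h]

section Integral

variable {α : Type*} [MeasurableSpace α] {μ : Measure α} {g : α → ℝ}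

lemma integrable_of_lintegral_ofReal_ne_top (hg : AEStronglyMeasurable g μ)
    (hpos : ∫⁻ x, ENNReal.ofReal (g x) ∂μ ≠ ⊤) (hneg : ∫⁻ x, ENNReal.ofReal (-g x) ∂μ ≠ ⊤) :
    Integrable g μ := by
  have hpart : ∀ {h : α → ℝ}, AEStronglyMeasurable h μ → ∫⁻ x, ENNReal.ofReal (h x) ∂μ ≠ ⊤ →
      Integrable (fun x => max (h x) 0) μ := fun hh hfin =>
    ⟨hh.sup aestronglyMeasurable_const,
      (hasFiniteIntegral_iff_ofReal (ae_of_all _ fun _ => le_max_right _ _)).2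
        (by simpa [ENNReal.ofReal_max] using hfin.lt_top)⟩
  exact ((hpart hg hpos).sub (hpart hg.neg hneg)).congr
    (ae_of_all _ fun x => max_zero_sub_max_neg_zero_eq_self (g x))

lemma coe_integral_eq_lintegral_ofReal_sub (hg : Integrable g μ) :
    ((∫ x, g x ∂μ : ℝ) : EReal) = ((∫⁻ x, ENNReal.ofReal (g x) ∂μ : ℝ≥0∞) : EReal)
      - ((∫⁻ x, ENNReal.ofReal (-g x) ∂μ : ℝ≥0∞) : EReal) := by
  have hneg : ∫⁻ x, ENNReal.ofReal (-g x) ∂μ ≠ ⊤ := hg.neg.lintegral_lt_top.ne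
  rw [integral_eq_lintegral_pos_part_sub_lintegral_neg_part hg, EReal.coe_sub,
    EReal.coe_ennreal_toReal hg.lintegral_lt_top.ne, EReal.coe_ennreal_toReal hneg]

lemma coe_lintegral_ofReal_add_integral_min (hg : Integrable g μ) :
    ((∫⁻ x, ENNReal.ofReal (g x) ∂μ : ℝ≥0∞) : EReal) + ((∫ x, min (g x) 0 ∂μ : ℝ) : EReal)
      = ((∫ x, g x ∂μ : ℝ) : EReal) := by
  have hmin : Integrable (fun x => min (g x) 0) μ := hg.inf (integrable_zero _ _ _)
  rw [coe_integral_eq_lintegral_ofReal_sub hg, coe_integral_eq_lintegral_ofReal_sub hmin]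
  simp [ENNReal.ofReal_eq_zero.2, sub_eq_add_neg, ENNReal.ofReal_neg_min_zero]

lemma integrable_of_norm_le_on_of_eq_zero_off {s : Set α} {B : ℝ} (hs : MeasurableSet s)
    (hμs : μ s ≠ ⊤) (hg : AEStronglyMeasurable g μ) (hB : ∀ x ∈ s, ‖g x‖ ≤ B)
    (h0 : ∀ x ∉ s, g x = 0) :
    Integrable g μ :=
  (Measure.integrableOn_of_bounded hμs hg ((ae_restrict_iff' hs).2 (ae_of_all _ hB))
    ).integrable_of_forall_notMem_eq_zero h0

variable {f : α → EReal} {Q : Measure α}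

lemma intEE_eq_integral (hf_top : ∀ x, f x ≠ ⊤) (hbot : ∀ᵐ x ∂Q, f x ≠ ⊥)
    (hint : Integrable (fun x => (f x).toReal) Q) :
    intEE f Q = ((∫ x, (f x).toReal ∂Q : ℝ) : EReal) := by
  rw [intEE, coe_integral_eq_lintegral_ofReal_sub hint,
    lintegral_congr fun x => ePos_of_ne_top (hf_top x),
    lintegral_congr_ae (hbot.mono fun x hx => ePos_neg_of_ne_bot hx)]

lemma ae_ne_bot_of_lintegral_ePos_neg_ne_top (hf : Measurable f)
    (h : ∫⁻ x, ePos (-f x) ∂Q ≠ ⊤) : ∀ᵐ x ∂Q, f x ≠ ⊥ := by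
  simp only [ae_iff, ne_eq, not_not]
  refine by_contra fun hQ => h (eq_top_iff.2 ?_)
  have hs : MeasurableSet {x | f x = ⊥} := hf (measurableSet_singleton ⊥)
  calc ⊤ = ∫⁻ _ in {x | f x = ⊥}, ⊤ ∂Q := by rw [setLIntegral_const, ENNReal.top_mul hQ]
    _ = ∫⁻ x in {x | f x = ⊥}, ePos (-f x) ∂Q :=
        setLIntegral_congr_fun hs fun x hx => by simp_all [ePos]
    _ ≤ ∫⁻ x, ePos (-f x) ∂Q := setLIntegral_le_lintegral _ _

lemma integrable_toReal_of_lintegral_ePos_neg_ne_top {C : ℝ} [IsFiniteMeasure Q]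
    (hf : Measurable f) (hbd : ∀ x, f x ≤ (C : EReal)) (h : ∫⁻ x, ePos (-f x) ∂Q ≠ ⊤) :
    Integrable (fun x => (f x).toReal) Q := by
  have hbot := ae_ne_bot_of_lintegral_ePos_neg_ne_top hf h
  have hle : ∀ x, ENNReal.ofReal (f x).toReal ≤ ENNReal.ofReal C := fun x => by
    rcases eq_or_ne (f x) ⊥ with hx | hx
    · simp [hx]
    · exact ENNReal.ofReal_le_ofReal (by simpa using EReal.toReal_le_toReal (hbd x) hx (by simp))
  refine integrable_of_lintegral_ofReal_ne_top hf.ereal_toReal.aestronglyMeasurable ?_ ?_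
  · refine ne_top_of_le_ne_top ?_ (lintegral_mono hle)
    simp [lintegral_const, ENNReal.mul_eq_top]
  · rwa [lintegral_congr_ae (hbot.mono fun x hx => (ePos_neg_of_ne_bot hx).symm)]

end Integral

section Entropy

variable {α : Type*} [MeasureSpace α] {Q : Measure α}

lemma hent_eq_integral (hQ : Q ≪ volume) (hint : Integrable
      (fun x => (Q.rnDeriv volume x).toReal * log (Q.rnDeriv volume x).toReal)) :
    Hent Q
      = ((∫ x, (Q.rnDeriv volume x).toReal * log (Q.rnDeriv volume x).toReal : ℝ) : EReal) := by
  rw [Hent, if_pos ⟨hQ, hint.inf (integrable_zero _ _ _)⟩,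
    coe_lintegral_ofReal_add_integral_min hint]

lemma hent_ne_top_iff : Hent Q ≠ ⊤ ↔ Q ≪ volume ∧ Integrable
      (fun x => (Q.rnDeriv volume x).toReal * log (Q.rnDeriv volume x).toReal) := by
  refine ⟨fun hH => ?_, fun ⟨hQ, hint⟩ => by simp [hent_eq_integral hQ hint]⟩
  rw [Hent] at hH
  split_ifs at hH with h
  · refine ⟨h.1, integrable_of_lintegral_ofReal_ne_top ?_ ?_ ?_⟩
    · exact ((Measure.measurable_rnDeriv _ _).ennreal_toReal.mul
        (Measure.measurable_rnDeriv _ _).ennreal_toReal.log).aestronglyMeasurable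
    · exact fun htop => hH (by rw [htop, EReal.coe_ennreal_top, EReal.top_add_coe])
    · simpa [ENNReal.ofReal_neg_min_zero] using h.2.neg.lintegral_lt_top.ne
  · exact absurd rfl hH

end Entropy

lemma mul_klFun_div (a : ℝ) {q : ℝ} (hq : q ≠ 0) :
    q * klFun (a / q) = a * log a - a * log q + q - a := by
  rcases eq_or_ne a 0 with rfl | ha
  · simp [klFun_zero]
  · rw [klFun_apply, log_div ha hq]
    field_simp

lemma isProbabilityMeasure_withDensity {α : Type*} [MeasurableSpace α] {μ : Measure α}
    {r : α → ℝ≥0∞} (h : ∫⁻ x, r x ∂μ = 1) : IsProbabilityMeasure (μ.withDensity r) :=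
  ⟨by rw [withDensity_apply _ MeasurableSet.univ, Measure.restrict_univ, h]⟩

section Gibbs

variable {α : Type*} [MeasureSpace α] {f : α → EReal}

def partitionFn (f : α → EReal) : ℝ≥0∞ := ∫⁻ x, expE (f x)

def gibbsDensity (f : α → EReal) (x : α) : ℝ≥0∞ := expE (f x) / partitionFn f

def gibbsMeasure (f : α → EReal) : Measure α := volume.withDensity (gibbsDensity f)

lemma measurable_gibbsDensity (hf : Measurable f) : Measurable (gibbsDensity f) :=
  (measurable_expE.comp hf).div_const _

lemma gibbsDensity_ne_top (hf_top : ∀ x, f x ≠ ⊤) (hZ0 : partitionFn f ≠ 0) (x : α) :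
    gibbsDensity f x ≠ ⊤ :=
  ENNReal.div_ne_top (expE_ne_top (hf_top x)) hZ0

lemma gibbsDensity_of_eq_bot {x : α} (hx : f x = ⊥) : gibbsDensity f x = 0 := by
  simp [gibbsDensity, expE, hx]

lemma toReal_gibbsDensity_pos (hf_top : ∀ x, f x ≠ ⊤) (hZ0 : partitionFn f ≠ 0)
    (hZtop : partitionFn f ≠ ⊤) {x : α} (hx : f x ≠ ⊥) : 0 < (gibbsDensity f x).toReal :=
  ENNReal.toReal_pos (by simp [gibbsDensity, expE, hx, hf_top x, hZtop, exp_pos])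
    (gibbsDensity_ne_top hf_top hZ0 x)

lemma log_toReal_gibbsDensity (hf_top : ∀ x, f x ≠ ⊤) (hZ0 : partitionFn f ≠ 0)
    (hZtop : partitionFn f ≠ ⊤) {x : α} (hx : f x ≠ ⊥) :
    log (gibbsDensity f x).toReal = (f x).toReal - log (partitionFn f).toReal := by
  rw [gibbsDensity, expE, if_neg hx, if_neg (hf_top x), ENNReal.toReal_div,
    ENNReal.toReal_ofReal (exp_pos _).le, log_div (exp_pos _).ne'
      (ENNReal.toReal_pos hZ0 hZtop).ne', log_exp]

lemma lintegral_gibbsDensity (hZ0 : partitionFn f ≠ 0) (hZtop : partitionFn f ≠ ⊤) :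
    ∫⁻ x, gibbsDensity f x = 1 := by
  simp only [gibbsDensity, div_eq_mul_inv]
  rw [lintegral_mul_const' _ _ (ENNReal.inv_ne_top.2 hZ0)]
  exact ENNReal.mul_inv_cancel hZ0 hZtop

lemma isProbabilityMeasure_gibbsMeasure (hZ0 : partitionFn f ≠ 0) (hZtop : partitionFn f ≠ ⊤) :
    IsProbabilityMeasure (gibbsMeasure f) :=
  isProbabilityMeasure_withDensity (lintegral_gibbsDensity hZ0 hZtop)

lemma integrable_toReal_gibbsDensity (hf : Measurable f) (hZ0 : partitionFn f ≠ 0)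
    (hZtop : partitionFn f ≠ ⊤) : Integrable fun x => (gibbsDensity f x).toReal :=
  integrable_toReal_of_lintegral_ne_top (measurable_gibbsDensity hf).aemeasurable
    (by rw [lintegral_gibbsDensity hZ0 hZtop]; exact ENNReal.one_ne_top)

lemma integral_toReal_gibbsDensity (hf : Measurable f) (hf_top : ∀ x, f x ≠ ⊤)
    (hZ0 : partitionFn f ≠ 0) (hZtop : partitionFn f ≠ ⊤) :
    ∫ x, (gibbsDensity f x).toReal = 1 := by
  rw [integral_toReal (measurable_gibbsDensity hf).aemeasurable
    (ae_of_all _ fun x => (gibbsDensity_ne_top hf_top hZ0 x).lt_top),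
    lintegral_gibbsDensity hZ0 hZtop, ENNReal.toReal_one]

end Gibbs

section Objective

variable {α : Type*} [MeasureSpace α] {f : α → EReal} {r : α → ℝ≥0∞}

/-- `r` is the density of a probability measure `Q ≪ volume` with `H(Q) < ∞` and `f ∈ L¹(Q)`. -/
structure IsAdmissibleDensity (f : α → EReal) (r : α → ℝ≥0∞) : Prop where
  measurable : Measurable r
  ae_lt_top : ∀ᵐ x, r x < ⊤
  lintegral_eq_one : ∫⁻ x, r x = 1
  ae_eq_zero_of_eq_bot : ∀ᵐ x, f x = ⊥ → r x = 0
  integrable_mul_log : Integrable fun x => (r x).toReal * log (r x).toReal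
  integrable_mul : Integrable fun x => (r x).toReal * (f x).toReal

namespace IsAdmissibleDensity

lemma integral_toReal (hr : IsAdmissibleDensity f r) : ∫ x, (r x).toReal = 1 := by
  rw [MeasureTheory.integral_toReal hr.measurable.aemeasurable hr.ae_lt_top, hr.lintegral_eq_one,
    ENNReal.toReal_one]

lemma objective_withDensity [SigmaFinite (volume : Measure α)] (hr : IsAdmissibleDensity f r)
    (hf_top : ∀ x, f x ≠ ⊤) :
    intEE f (volume.withDensity r) - Hent (volume.withDensity r)
      = ((∫ x, ((r x).toReal * (f x).toReal - (r x).toReal * log (r x).toReal) : ℝ) : EReal) := by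
  have hrn := Measure.rnDeriv_withDensity volume hr.measurable
  have hent : (fun x => ((volume.withDensity r).rnDeriv volume x).toReal
      * log ((volume.withDensity r).rnDeriv volume x).toReal)
      =ᵐ[volume] fun x => (r x).toReal * log (r x).toReal := hrn.mono fun x hx => by simp only [hx]
  have hbot : ∀ᵐ x ∂volume.withDensity r, f x ≠ ⊥ :=
    (ae_withDensity_iff hr.measurable).2
      (hr.ae_eq_zero_of_eq_bot.mono fun x hx hr0 hfx => hr0 (hx hfx))
  have hint : Integrable (fun x => (f x).toReal) (volume.withDensity r) :=
    (integrable_withDensity_iff_integrable_smul' hr.measurable hr.ae_lt_top).2 hr.integrable_mul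
  rw [intEE_eq_integral hf_top hbot hint,
    integral_withDensity_eq_integral_toReal_smul hr.measurable hr.ae_lt_top,
    hent_eq_integral (withDensity_absolutelyContinuous _ _)
      (hr.integrable_mul_log.congr hent.symm),
    integral_congr_ae hent, ← EReal.coe_sub]
  simp only [smul_eq_mul]
  rw [← integral_sub hr.integrable_mul hr.integrable_mul_log]

lemma integral_objective_eq (hr : IsAdmissibleDensity f r) (hf : Measurable f)
    (hf_top : ∀ x, f x ≠ ⊤) (hZ0 : partitionFn f ≠ 0) (hZtop : partitionFn f ≠ ⊤) :
    Integrable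
      (fun x => (gibbsDensity f x).toReal * klFun ((r x).toReal / (gibbsDensity f x).toReal))
    ∧ ∫ x, ((r x).toReal * (f x).toReal - (r x).toReal * log (r x).toReal)
      = log (partitionFn f).toReal
        - ∫ x, (gibbsDensity f x).toReal * klFun ((r x).toReal / (gibbsDensity f x).toReal) := by
  set q : α → ℝ := fun x => (gibbsDensity f x).toReal
  set L := log (partitionFn f).toReal
  have hr_int : Integrable fun x => (r x).toReal :=
    integrable_toReal_of_lintegral_ne_top hr.measurable.aemeasurable
      (by rw [hr.lintegral_eq_one]; exact ENNReal.one_ne_top)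
  have hq := integrable_toReal_gibbsDensity hf hZ0 hZtop
  have hpt : (fun x => q x * klFun ((r x).toReal / q x)) =ᵐ[volume] fun x =>
      (r x).toReal * log (r x).toReal - (r x).toReal * (f x).toReal + L * (r x).toReal
        + q x - (r x).toReal := by
    filter_upwards [hr.ae_eq_zero_of_eq_bot] with x hx
    rcases eq_or_ne (f x) ⊥ with hfx | hfx
    · simp [q, hx hfx, gibbsDensity_of_eq_bot hfx]
    · rw [mul_klFun_div _ (toReal_gibbsDensity_pos hf_top hZ0 hZtop hfx).ne',
        log_toReal_gibbsDensity hf_top hZ0 hZtop hfx]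
      ring
  have h₁ : Integrable fun x => (r x).toReal * log (r x).toReal - (r x).toReal * (f x).toReal :=
    hr.integrable_mul_log.sub hr.integrable_mul
  have h₂ : Integrable fun x => (r x).toReal * log (r x).toReal - (r x).toReal * (f x).toReal
      + L * (r x).toReal := h₁.add (hr_int.const_mul L)
  have h₃ : Integrable fun x => (r x).toReal * log (r x).toReal - (r x).toReal * (f x).toReal
      + L * (r x).toReal + q x := h₂.add hq
  refine ⟨(h₃.sub hr_int).congr hpt.symm, ?_⟩
  rw [integral_congr_ae hpt, integral_sub h₃ hr_int, integral_add h₂ hq,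
    integral_add h₁ (hr_int.const_mul L), integral_sub hr.integrable_mul_log hr.integrable_mul,
    integral_sub hr.integrable_mul hr.integrable_mul_log, integral_const_mul, hr.integral_toReal,
    integral_toReal_gibbsDensity hf hf_top hZ0 hZtop]
  ring

lemma integral_objective_le (hr : IsAdmissibleDensity f r) (hf : Measurable f)
    (hf_top : ∀ x, f x ≠ ⊤) (hZ0 : partitionFn f ≠ 0) (hZtop : partitionFn f ≠ ⊤) :
    ∫ x, ((r x).toReal * (f x).toReal - (r x).toReal * log (r x).toReal)
      ≤ log (partitionFn f).toReal := by
  rw [(hr.integral_objective_eq hf hf_top hZ0 hZtop).2, sub_le_self_iff]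
  exact integral_nonneg fun x =>
    mul_nonneg ENNReal.toReal_nonneg (klFun_nonneg (by positivity))

lemma ae_eq_gibbsDensity (hr : IsAdmissibleDensity f r) (hf : Measurable f)
    (hf_top : ∀ x, f x ≠ ⊤) (hZ0 : partitionFn f ≠ 0) (hZtop : partitionFn f ≠ ⊤)
    (h : ∫ x, ((r x).toReal * (f x).toReal - (r x).toReal * log (r x).toReal)
      = log (partitionFn f).toReal) :
    r =ᵐ[volume] gibbsDensity f := by
  obtain ⟨hint, heq⟩ := hr.integral_objective_eq hf hf_top hZ0 hZtop
  have hzero := (integral_eq_zero_iff_of_nonneg (fun x =>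
    mul_nonneg ENNReal.toReal_nonneg (klFun_nonneg (by positivity))) hint).1 (by linarith)
  filter_upwards [hzero, hr.ae_eq_zero_of_eq_bot, hr.ae_lt_top] with x hx hbot htop
  rcases eq_or_ne (f x) ⊥ with hfx | hfx
  · rw [hbot hfx, gibbsDensity_of_eq_bot hfx]
  · have hq := toReal_gibbsDensity_pos hf_top hZ0 hZtop hfx
    have hkl := (mul_eq_zero.1 hx).resolve_left hq.ne'
    rw [klFun_eq_zero_iff (by positivity), div_eq_one_iff_eq hq.ne'] at hkl
    exact (ENNReal.toReal_eq_toReal_iff' htop.ne (gibbsDensity_ne_top hf_top hZ0 x)).1 hkl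

end IsAdmissibleDensity

end Objective

section Maximizers

variable {α : Type*} [MeasureSpace α] [SigmaFinite (volume : Measure α)] {f : α → EReal} {C : ℝ}

lemma isAdmissibleDensity_rnDeriv (hf : Measurable f) (hbd : ∀ x, f x ≤ (C : EReal))
    {Q : Measure α} [IsProbabilityMeasure Q] (h : intEE f Q - Hent Q ≠ ⊥) :
    Q ≪ volume ∧ IsAdmissibleDensity f (Q.rnDeriv volume) := by
  have hH : Hent Q ≠ ⊤ := fun hH => h (by rw [hH, EReal.sub_top])
  have hneg : ∫⁻ x, ePos (-f x) ∂Q ≠ ⊤ := fun hneg => h (by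
    rw [intEE, hneg, EReal.coe_ennreal_top, EReal.sub_top, EReal.bot_sub])
  obtain ⟨hAC, hent⟩ := hent_ne_top_iff.1 hH
  have hs : MeasurableSet {x | f x = ⊥} := hf (measurableSet_singleton ⊥)
  refine ⟨hAC, Measure.measurable_rnDeriv _ _, Measure.rnDeriv_lt_top _ _,
    by rw [Measure.lintegral_rnDeriv hAC, measure_univ], ?_, hent, ?_⟩
  · refine (setLIntegral_eq_zero_iff hs (Measure.measurable_rnDeriv _ _)).1 ?_
    rw [Measure.setLIntegral_rnDeriv' hAC hs]
    simpa [ae_iff] using ae_ne_bot_of_lintegral_ePos_neg_ne_top hf hneg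
  · simpa using (integrable_rnDeriv_smul_iff hAC).2
      (integrable_toReal_of_lintegral_ePos_neg_ne_top hf hbd hneg)

lemma isAdmissibleDensity_gibbsDensity (hf : Measurable f) (hf_top : ∀ x, f x ≠ ⊤)
    (hZ0 : partitionFn f ≠ 0) (hZtop : partitionFn f ≠ ⊤) (hP : Hent (gibbsMeasure f) ≠ ⊤) :
    IsAdmissibleDensity f (gibbsDensity f) := by
  have hmul_log : Integrable fun x => (gibbsDensity f x).toReal * log (gibbsDensity f x).toReal :=
    (hent_ne_top_iff.1 hP).2.congr <|
      (Measure.rnDeriv_withDensity volume (measurable_gibbsDensity hf)).mono fun x hx => by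
        simp only [gibbsMeasure, hx]
  refine ⟨measurable_gibbsDensity hf,
    ae_of_all _ fun x => (gibbsDensity_ne_top hf_top hZ0 x).lt_top,
    lintegral_gibbsDensity hZ0 hZtop, ae_of_all _ fun x => gibbsDensity_of_eq_bot, hmul_log, ?_⟩
  refine (hmul_log.add ((integrable_toReal_gibbsDensity hf hZ0 hZtop).mul_const
    (log (partitionFn f).toReal))).congr (ae_of_all _ fun x => ?_)
  rcases eq_or_ne (f x) ⊥ with hfx | hfx
  · simp [gibbsDensity_of_eq_bot hfx]
  · simp only [Pi.add_apply, log_toReal_gibbsDensity hf_top hZ0 hZtop hfx]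
    ring

lemma objective_gibbsMeasure (hf : Measurable f) (hf_top : ∀ x, f x ≠ ⊤)
    (hZ0 : partitionFn f ≠ 0) (hZtop : partitionFn f ≠ ⊤) (hP : Hent (gibbsMeasure f) ≠ ⊤) :
    intEE f (gibbsMeasure f) - Hent (gibbsMeasure f) = log (partitionFn f).toReal := by
  have hr := isAdmissibleDensity_gibbsDensity hf hf_top hZ0 hZtop hP
  have hkl : ∀ x, (gibbsDensity f x).toReal
      * klFun ((gibbsDensity f x).toReal / (gibbsDensity f x).toReal) = 0 := fun x => by
    rcases eq_or_ne (gibbsDensity f x).toReal 0 with h | h <;> simp [h, klFun_one]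
  rw [gibbsMeasure, hr.objective_withDensity hf_top,
    (hr.integral_objective_eq hf hf_top hZ0 hZtop).2]
  simp [hkl]

lemma objective_le_log_partitionFn (hf : Measurable f) (hbd : ∀ x, f x ≤ (C : EReal))
    (hZ0 : partitionFn f ≠ 0) (hZtop : partitionFn f ≠ ⊤) (Q : Measure α) [IsProbabilityMeasure Q] :
    intEE f Q - Hent Q ≤ log (partitionFn f).toReal := by
  have hf_top : ∀ x, f x ≠ ⊤ := fun x => ne_top_of_le_ne_top (EReal.coe_ne_top C) (hbd x)
  by_cases h : intEE f Q - Hent Q = ⊥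
  · simp [h]
  obtain ⟨hAC, hr⟩ := isAdmissibleDensity_rnDeriv hf hbd h
  rw [← Measure.withDensity_rnDeriv_eq Q volume hAC, hr.objective_withDensity hf_top]
  exact EReal.coe_le_coe_iff.2 (hr.integral_objective_le hf hf_top hZ0 hZtop)

lemma eq_gibbsMeasure_of_objective_eq (hf : Measurable f) (hbd : ∀ x, f x ≤ (C : EReal))
    (hZ0 : partitionFn f ≠ 0) (hZtop : partitionFn f ≠ ⊤) (Q : Measure α) [IsProbabilityMeasure Q]
    (h : intEE f Q - Hent Q = log (partitionFn f).toReal) : Q = gibbsMeasure f := by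
  have hf_top : ∀ x, f x ≠ ⊤ := fun x => ne_top_of_le_ne_top (EReal.coe_ne_top C) (hbd x)
  obtain ⟨hAC, hr⟩ := isAdmissibleDensity_rnDeriv hf hbd (h ▸ EReal.coe_ne_bot _)
  rw [← Measure.withDensity_rnDeriv_eq Q volume hAC] at h ⊢
  rw [hr.objective_withDensity hf_top, EReal.coe_eq_coe_iff] at h
  exact withDensity_congr_ae (hr.ae_eq_gibbsDensity hf hf_top hZ0 hZtop h)

end Maximizers

section LowerBound

variable {α : Type*} [MeasureSpace α] {f : α → EReal} {A : Set α} {m : ℝ}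

def condGibbsDensity (f : α → EReal) (A : Set α) (x : α) : ℝ≥0∞ :=
  A.indicator (gibbsDensity f) x / gibbsMeasure f A

lemma toReal_condGibbsDensity_of_mem {x : α} (hx : x ∈ A) :
    (condGibbsDensity f A x).toReal = (gibbsDensity f x).toReal / (gibbsMeasure f A).toReal := by
  simp [condGibbsDensity, hx, ENNReal.toReal_div]

lemma condGibbsDensity_of_notMem {x : α} (hx : x ∉ A) : condGibbsDensity f A x = 0 := by
  simp [condGibbsDensity, hx]

lemma volume_lt_top_of_le_on (hf : Measurable f) (hZtop : partitionFn f ≠ ⊤)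
    (hfA : ∀ x ∈ A, (m : EReal) ≤ f x) : volume A < ⊤ :=
  calc volume A ≤ volume {x | ENNReal.ofReal (exp m) ≤ expE (f x)} :=
        measure_mono fun x hx => by simpa [expE_coe] using monotone_expE (hfA x hx)
    _ ≤ partitionFn f / ENNReal.ofReal (exp m) :=
        meas_ge_le_lintegral_div (measurable_expE.comp hf).aemeasurable
          (by simp [exp_pos]) ENNReal.ofReal_ne_top
    _ < ⊤ := ENNReal.div_lt_top hZtop (by simp [exp_pos])

lemma isAdmissibleDensity_condGibbsDensity {C : ℝ} (hf : Measurable f)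
    (hbd : ∀ x, f x ≤ (C : EReal)) (hZ0 : partitionFn f ≠ 0) (hZtop : partitionFn f ≠ ⊤)
    (hA : MeasurableSet A) (hfA : ∀ x ∈ A, (m : EReal) ≤ f x) (hPA : gibbsMeasure f A ≠ 0) :
    IsAdmissibleDensity f (condGibbsDensity f A) := by
  have := isProbabilityMeasure_gibbsMeasure hZ0 hZtop
  set r := condGibbsDensity f A
  set M := ENNReal.ofReal (exp C) / partitionFn f / gibbsMeasure f A
  have hM : M ≠ ⊤ := ENNReal.div_ne_top (ENNReal.div_ne_top ENNReal.ofReal_ne_top hZ0) hPA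
  have hle : ∀ x, r x ≤ M := fun x => by
    refine ENNReal.div_le_div_right ((Set.indicator_le_self _ _ x).trans
      (ENNReal.div_le_div_right ?_ _)) _
    simpa [expE_coe] using monotone_expE (hbd x)
  have hle' : ∀ x, (r x).toReal ≤ M.toReal := fun x => ENNReal.toReal_mono hM (hle x)
  have hr_meas : Measurable r := ((measurable_gibbsDensity hf).indicator hA).div_const _
  have hr0 : ∀ x ∉ A, (r x).toReal = 0 := fun x hx => by simp [r, condGibbsDensity_of_notMem hx]
  have hvol := (volume_lt_top_of_le_on hf hZtop hfA).ne
  obtain ⟨B, hB⟩ := (isCompact_Icc (a := 0) (b := M.toReal)).exists_bound_of_continuousOn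
    continuous_mul_log.continuousOn
  refine ⟨hr_meas, ae_of_all _ fun x => ?_, ?_, ae_of_all _ fun x hx => ?_, ?_, ?_⟩
  · exact (hle x).trans_lt hM.lt_top
  · have hPA' : ∫⁻ x in A, gibbsDensity f x = gibbsMeasure f A := (withDensity_apply _ hA).symm
    simp only [r, condGibbsDensity, div_eq_mul_inv]
    rw [lintegral_mul_const' _ _ (ENNReal.inv_ne_top.2 hPA), lintegral_indicator hA, hPA']
    exact ENNReal.mul_inv_cancel hPA (measure_ne_top _ _)
  · exact condGibbsDensity_of_notMem fun hxA => by simpa [hx] using hfA x hxA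
  · exact integrable_of_norm_le_on_of_eq_zero_off hA hvol
      (hr_meas.ennreal_toReal.mul hr_meas.ennreal_toReal.log).aestronglyMeasurable
      (fun x _ => hB _ ⟨ENNReal.toReal_nonneg, hle' x⟩) (fun x hx => by simp [hr0 x hx])
  · refine integrable_of_norm_le_on_of_eq_zero_off hA hvol
      (hr_meas.ennreal_toReal.mul hf.ereal_toReal).aestronglyMeasurable
      (B := M.toReal * max |m| |C|) (fun x hx => ?_) (fun x hx => by simp [hr0 x hx])
    have hfx : f x ≠ ⊥ := fun hfx => by simpa [hfx] using hfA x hx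
    have hm : m ≤ (f x).toReal := by
      simpa using EReal.toReal_le_toReal (hfA x hx) (EReal.coe_ne_bot m)
        (ne_top_of_le_ne_top (EReal.coe_ne_top C) (hbd x))
    have hC : (f x).toReal ≤ C := by simpa using EReal.toReal_le_toReal (hbd x) hfx (by simp)
    rw [norm_mul, Real.norm_of_nonneg ENNReal.toReal_nonneg]
    exact mul_le_mul (hle' x) (abs_le_max_abs_abs hm hC) (norm_nonneg _)
      (ENNReal.toReal_nonneg.trans (hle' x))

lemma integral_objective_condGibbsDensity (hf_top : ∀ x, f x ≠ ⊤) (hZ0 : partitionFn f ≠ 0)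
    (hZtop : partitionFn f ≠ ⊤) (hfA : ∀ x ∈ A, (m : EReal) ≤ f x)
    (hr : IsAdmissibleDensity f (condGibbsDensity f A)) (hPA : gibbsMeasure f A ≠ 0)
    (hPA_top : gibbsMeasure f A ≠ ⊤) :
    ∫ x, ((condGibbsDensity f A x).toReal * (f x).toReal
        - (condGibbsDensity f A x).toReal * log (condGibbsDensity f A x).toReal)
      = log (partitionFn f).toReal + log (gibbsMeasure f A).toReal := by
  have hc := ENNReal.toReal_pos hPA hPA_top
  have hpt : ∀ x, (condGibbsDensity f A x).toReal * (f x).toReal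
      - (condGibbsDensity f A x).toReal * log (condGibbsDensity f A x).toReal
      = (log (partitionFn f).toReal + log (gibbsMeasure f A).toReal)
        * (condGibbsDensity f A x).toReal := fun x => by
    by_cases hx : x ∈ A
    · have hfx : f x ≠ ⊥ := fun hfx => by simpa [hfx] using hfA x hx
      rw [toReal_condGibbsDensity_of_mem hx,
        log_div (toReal_gibbsDensity_pos hf_top hZ0 hZtop hfx).ne' hc.ne',
        log_toReal_gibbsDensity hf_top hZ0 hZtop hfx]
      ring
    · simp [condGibbsDensity_of_notMem hx]
  simp only [hpt, integral_const_mul, hr.integral_toReal, mul_one]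

lemma tendsto_gibbsMeasure_setOf_le (hf : Measurable f) (hZ0 : partitionFn f ≠ 0)
    (hZtop : partitionFn f ≠ ⊤) :
    Tendsto (fun k : ℕ => gibbsMeasure f {x | ((-k : ℝ) : EReal) ≤ f x}) atTop (𝓝 1) := by
  have hmono : Monotone fun k : ℕ => {x | ((-k : ℝ) : EReal) ≤ f x} := fun k l hkl x hx =>
    le_trans (EReal.coe_le_coe_iff.2 (neg_le_neg (Nat.cast_le.2 hkl))) hx
  have hunion : ⋃ k : ℕ, {x | ((-k : ℝ) : EReal) ≤ f x} = {x | f x = ⊥}ᶜ := by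
    ext x
    simp only [Set.mem_iUnion, Set.mem_compl_iff]
    show (∃ k : ℕ, ((-k : ℝ) : EReal) ≤ f x) ↔ ¬f x = ⊥
    generalize f x = z
    induction z using EReal.rec with
    | bot => simp [EReal.natCast_ne_top]
    | top => simp
    | coe y =>
      refine iff_of_true ⟨⌈-y⌉₊, EReal.coe_le_coe_iff.2 ?_⟩ (EReal.coe_ne_bot y)
      linarith [Nat.le_ceil (-y)]
  have hs : MeasurableSet {x | f x = ⊥} := hf (measurableSet_singleton ⊥)
  have hbot : gibbsMeasure f {x | f x = ⊥} = 0 := by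
    rw [gibbsMeasure, withDensity_apply _ hs]
    exact setLIntegral_eq_zero hs fun x hx => gibbsDensity_of_eq_bot hx
  have := isProbabilityMeasure_gibbsMeasure hZ0 hZtop
  have h := tendsto_measure_iUnion_atTop (μ := gibbsMeasure f) hmono
  rwa [hunion, measure_compl hs (measure_ne_top _ _), hbot, measure_univ, tsub_zero] at h

lemma log_partitionFn_le_sSup_objective [SigmaFinite (volume : Measure α)] {C : ℝ}
    (hf : Measurable f) (hbd : ∀ x, f x ≤ (C : EReal)) (hZ0 : partitionFn f ≠ 0)
    (hZtop : partitionFn f ≠ ⊤) :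
    (log (partitionFn f).toReal : EReal)
      ≤ sSup {e : EReal | ∃ Q : Measure α, IsProbabilityMeasure Q ∧ e = intEE f Q - Hent Q} := by
  have hf_top : ∀ x, f x ≠ ⊤ := fun x => ne_top_of_le_ne_top (EReal.coe_ne_top C) (hbd x)
  have := isProbabilityMeasure_gibbsMeasure hZ0 hZtop
  set L := log (partitionFn f).toReal
  set A : ℕ → Set α := fun k => {x | ((-k : ℝ) : EReal) ≤ f x}
  have hP := tendsto_gibbsMeasure_setOf_le hf hZ0 hZtop
  have hmem : ∀ k, gibbsMeasure f (A k) ≠ 0 → ((L + log (gibbsMeasure f (A k)).toReal : ℝ) : EReal)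
      ∈ {e : EReal | ∃ Q : Measure α, IsProbabilityMeasure Q ∧ e = intEE f Q - Hent Q} :=
    fun k hk => by
      have hfA : ∀ x ∈ A k, ((-k : ℝ) : EReal) ≤ f x := fun x hx => hx
      have hA : MeasurableSet (A k) := hf measurableSet_Ici
      have hr := isAdmissibleDensity_condGibbsDensity hf hbd hZ0 hZtop hA hfA hk
      exact ⟨_, isProbabilityMeasure_withDensity hr.lintegral_eq_one, by
        rw [hr.objective_withDensity hf_top,
          integral_objective_condGibbsDensity hf_top hZ0 hZtop hfA hr hk (measure_ne_top _ _)]⟩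
  have hlim : Tendsto (fun k => ((L + log (gibbsMeasure f (A k)).toReal : ℝ) : EReal)) atTop
      (𝓝 (L : EReal)) := by
    have hlog : Tendsto (fun k => L + log (gibbsMeasure f (A k)).toReal) atTop (𝓝 L) := by
      simpa [A] using ((continuousAt_log one_ne_zero).tendsto.comp
        ((ENNReal.tendsto_toReal ENNReal.one_ne_top).comp hP)).const_add L
    exact (continuous_coe_real_ereal.tendsto L).comp hlog
  refine le_of_tendsto hlim ?_
  filter_upwards [hP.eventually_ne one_ne_zero] with k hk using le_sSup (hmem k hk)

end LowerBound

/-- Theorem 3.3, Gibbs variational principle: for measurable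
`f : ℝⁿ → ℝ ∪ {−∞}` bounded above with `Z = ∫ e^f dx ∈ (0,∞)` and
`P(dx) = Z⁻¹ e^{f(x)} dx`, the supremum of `∫ f dQ − H(Q)` over probability measures
equals `log Z`, and the following are equivalent: (1) `H(P) < ∞`; (2) the supremum is
attained uniquely by `P`; (3) there exists a maximizer. -/
theorem stmt_17 (n : ℕ) (f : (Fin n → ℝ) → EReal) (hf : Measurable f)
    (C : ℝ) (hbd : ∀ x, f x ≤ (C : EReal))
    (hZ0 : (∫⁻ x, expE (f x) ∂(volume : Measure (Fin n → ℝ))) ≠ 0)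
    (hZtop : (∫⁻ x, expE (f x) ∂(volume : Measure (Fin n → ℝ))) ≠ ⊤) :
    (sSup {e : EReal | ∃ Q : Measure (Fin n → ℝ), IsProbabilityMeasure Q ∧
        e = intEE f Q - Hent Q}
      = ((Real.log (∫⁻ x, expE (f x) ∂(volume : Measure (Fin n → ℝ))).toReal : ℝ) : EReal))
    ∧
    (Hent ((volume : Measure (Fin n → ℝ)).withDensity
        (fun x => expE (f x) / ∫⁻ y, expE (f y) ∂(volume : Measure (Fin n → ℝ)))) ≠ ⊤
      ↔
      ((intEE f ((volume : Measure (Fin n → ℝ)).withDensity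
            (fun x => expE (f x) / ∫⁻ y, expE (f y) ∂(volume : Measure (Fin n → ℝ))))
          - Hent ((volume : Measure (Fin n → ℝ)).withDensity
            (fun x => expE (f x) / ∫⁻ y, expE (f y) ∂(volume : Measure (Fin n → ℝ))))
        = ((Real.log
            (∫⁻ x, expE (f x) ∂(volume : Measure (Fin n → ℝ))).toReal : ℝ) : EReal)) ∧
        ∀ Q : Measure (Fin n → ℝ), IsProbabilityMeasure Q →
          intEE f Q - Hent Q
            = ((Real.log
                (∫⁻ x, expE (f x) ∂(volume : Measure (Fin n → ℝ))).toReal : ℝ) : EReal) →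
          Q = (volume : Measure (Fin n → ℝ)).withDensity
            (fun x => expE (f x) / ∫⁻ y, expE (f y) ∂(volume : Measure (Fin n → ℝ)))))
    ∧
    (((intEE f ((volume : Measure (Fin n → ℝ)).withDensity
            (fun x => expE (f x) / ∫⁻ y, expE (f y) ∂(volume : Measure (Fin n → ℝ))))
          - Hent ((volume : Measure (Fin n → ℝ)).withDensity
            (fun x => expE (f x) / ∫⁻ y, expE (f y) ∂(volume : Measure (Fin n → ℝ))))
        = ((Real.log
            (∫⁻ x, expE (f x) ∂(volume : Measure (Fin n → ℝ))).toReal : ℝ) : EReal)) ∧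
        ∀ Q : Measure (Fin n → ℝ), IsProbabilityMeasure Q →
          intEE f Q - Hent Q
            = ((Real.log
                (∫⁻ x, expE (f x) ∂(volume : Measure (Fin n → ℝ))).toReal : ℝ) : EReal) →
          Q = (volume : Measure (Fin n → ℝ)).withDensity
            (fun x => expE (f x) / ∫⁻ y, expE (f y) ∂(volume : Measure (Fin n → ℝ))))
      ↔
      ∃ Q : Measure (Fin n → ℝ), IsProbabilityMeasure Q ∧
        intEE f Q - Hent Q
          = ((Real.log
              (∫⁻ x, expE (f x) ∂(volume : Measure (Fin n → ℝ))).toReal : ℝ) : EReal)) := by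
  have hf_top : ∀ x, f x ≠ ⊤ := fun x => ne_top_of_le_ne_top (EReal.coe_ne_top C) (hbd x)
  have huniq : ∀ Q, IsProbabilityMeasure Q → intEE f Q - Hent Q = log (partitionFn f).toReal →
      Q = gibbsMeasure f := fun Q _ => eq_gibbsMeasure_of_objective_eq hf hbd hZ0 hZtop Q
  refine ⟨le_antisymm (sSup_le ?_) (log_partitionFn_le_sSup_objective hf hbd hZ0 hZtop),
    ⟨fun hH => ⟨objective_gibbsMeasure hf hf_top hZ0 hZtop hH, huniq⟩, fun ⟨h, _⟩ hH => ?_⟩,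
    ⟨fun ⟨h, _⟩ => ⟨_, isProbabilityMeasure_gibbsMeasure hZ0 hZtop, h⟩, fun ⟨Q, hQ, h⟩ => ?_⟩⟩
  · rintro _ ⟨Q, hQ, rfl⟩
    exact objective_le_log_partitionFn hf hbd hZ0 hZtop Q
  · rw [hH, EReal.sub_top] at h
    exact EReal.bot_ne_coe _ h
  · obtain rfl := huniq Q hQ h
    exact ⟨h, huniq⟩

end
end

section
/- Let Q₁,…,Qₙ be probability measures on ℝ and let t₁,…,tₙ ∈ [0,1] with Σᵢ₌₁ⁿ tᵢ = 1. Then there exists a random vector X = (X₁,…,Xₙ) (on some probability space) such that Xᵢ has law Qᵢ for each i and H(Law(Σᵢ₌₁ⁿ tᵢXᵢ)) ≤ Σᵢ₌₁ⁿ tᵢH(Qᵢ). -/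
/-!
Couple the `Qᵢ` comonotonically: `Xᵢ = Fᵢ⁻¹(U)` with `U` uniform on `(0,1)` and `Fᵢ⁻¹` the
quantile function of `Qᵢ`. If `f` is nondecreasing on `(0,1)` and `P = Law(f(U))` has a density
`ρ`, the change of variables `x = f(u)` gives `ρ(f(u)) f'(u) = 1` for a.e. `u`, hence
`H(P) = -E[log f'(U)]`. The map `S = ∑ tᵢ Fᵢ⁻¹` is again nondecreasing with `S' = ∑ tᵢ (Fᵢ⁻¹)'`,
so `Law(∑ tᵢ Xᵢ) = Law(S(U))`, and concavity of `log` gives `-log S' ≤ ∑ tᵢ (-log (Fᵢ⁻¹)')`,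
which integrates to the claim. Terms with `tᵢ = 0` drop out, and if `H(Qᵢ) = ∞` for some
`tᵢ > 0` the right-hand side is `∞`.
-/

open MeasureTheory Real Filter Topology ProbabilityTheory
open scoped ENNReal NNReal BigOperators Classical

noncomputable section

open Set

section PositiveNegativeParts

variable {β : Type*} [MeasurableSpace β] {μ : Measure β} {f : β → ℝ}

lemma integrable_of_integrable_min_zero (hf : AEStronglyMeasurable f μ)
    (hmin : Integrable (fun x => min (f x) 0) μ) (hpos : ∫⁻ x, ENNReal.ofReal (f x) ∂μ ≠ ∞) :
    Integrable f μ := by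
  have hmax : Integrable (fun x => max (f x) 0) μ := by
    refine ⟨hf.sup aestronglyMeasurable_const, ?_⟩
    rw [hasFiniteIntegral_iff_ofReal (.of_forall fun x => le_max_right (f x) 0)]
    simpa only [ENNReal.ofReal_max, ENNReal.ofReal_zero, max_eq_left, zero_le] using hpos.lt_top
  have hsplit : f = fun x => max (f x) 0 + min (f x) 0 :=
    funext fun x => by rw [max_add_min, add_zero]
  exact hsplit ▸ hmax.add hmin

lemma coe_lintegral_ofReal_add_coe_integral_min_zero (hf : Integrable f μ) :
    ((∫⁻ x, ENNReal.ofReal (f x) ∂μ : ℝ≥0∞) : EReal) + ((∫ x, min (f x) 0 ∂μ : ℝ) : EReal)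
      = ((∫ x, f x ∂μ : ℝ) : EReal) := by
  have hmax : Integrable (fun x => max (f x) 0) μ := hf.sup (integrable_zero _ _ _)
  have hmin : Integrable (fun x => min (f x) 0) μ := hf.inf (integrable_zero _ _ _)
  have hpos : ∫⁻ x, ENNReal.ofReal (f x) ∂μ = ENNReal.ofReal (∫ x, max (f x) 0 ∂μ) := by
    rw [ofReal_integral_eq_lintegral_ofReal hmax (.of_forall fun x => le_max_right _ _)]
    simp only [ENNReal.ofReal_max, ENNReal.ofReal_zero, max_eq_left, zero_le]
  rw [hpos, EReal.coe_ennreal_ofReal,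
    max_eq_left (integral_nonneg (f := fun x => max (f x) 0) fun x => le_max_right _ _),
    ← EReal.coe_add, ← integral_add hmax hmin]
  simp only [max_add_min, add_zero]

end PositiveNegativeParts

section Entropy

variable {α : Type*} [MeasureSpace α] {P : Measure α}

lemma measurable_log_rnDeriv (P : Measure α) :
    Measurable fun x => log (P.rnDeriv volume x).toReal :=
  (Measure.measurable_rnDeriv P volume).ennreal_toReal.log

lemma min_mul_log_rnDeriv_eq_smul (P : Measure α) (x : α) :
    min ((P.rnDeriv volume x).toReal * log (P.rnDeriv volume x).toReal) 0
      = (P.rnDeriv volume x).toReal • min (log (P.rnDeriv volume x).toReal) 0 := by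
  rw [smul_eq_mul, mul_min_of_nonneg _ _ ENNReal.toReal_nonneg, mul_zero]

lemma lintegral_ofReal_mul_log_rnDeriv [SigmaFinite (volume : Measure α)] [SigmaFinite P]
    (hac : P ≪ volume) :
    ∫⁻ x, ENNReal.ofReal ((P.rnDeriv volume x).toReal * log (P.rnDeriv volume x).toReal)
      = ∫⁻ x, ENNReal.ofReal (log (P.rnDeriv volume x).toReal) ∂P := by
  rw [← lintegral_rnDeriv_mul hac (by fun_prop)]
  refine lintegral_congr_ae ?_
  filter_upwards [Measure.rnDeriv_lt_top P volume] with x hx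
  rw [ENNReal.ofReal_mul ENNReal.toReal_nonneg, ENNReal.ofReal_toReal hx.ne]

lemma Hent_eq_integral_log_rnDeriv [SigmaFinite (volume : Measure α)] [IsFiniteMeasure P]
    (hac : P ≪ volume)
    (hint : Integrable (fun x => log (P.rnDeriv volume x).toReal) P) :
    Hent P = ∫ x, log (P.rnDeriv volume x).toReal ∂P := by
  have hmin : Integrable (fun x => min (log (P.rnDeriv volume x).toReal) 0) P :=
    hint.inf (integrable_zero _ _ _)
  rw [Hent, if_pos ⟨hac, by simpa only [min_mul_log_rnDeriv_eq_smul,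
      integrable_rnDeriv_smul_iff hac] using hmin⟩, lintegral_ofReal_mul_log_rnDeriv hac]
  simp only [min_mul_log_rnDeriv_eq_smul, integral_rnDeriv_smul hac]
  exact coe_lintegral_ofReal_add_coe_integral_min_zero hint

lemma absolutelyContinuous_and_integrable_of_Hent_ne_top [SigmaFinite (volume : Measure α)]
    [IsFiniteMeasure P] (h : Hent P ≠ ⊤) :
    P ≪ volume ∧ Integrable (fun x => log (P.rnDeriv volume x).toReal) P := by
  unfold Hent at h
  split_ifs at h with hdef
  · obtain ⟨hac, hmin⟩ := hdef
    simp only [min_mul_log_rnDeriv_eq_smul, integrable_rnDeriv_smul_iff hac] at hmin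
    refine ⟨hac, integrable_of_integrable_min_zero
      (measurable_log_rnDeriv P).aestronglyMeasurable hmin ?_⟩
    rw [← lintegral_ofReal_mul_log_rnDeriv hac]
    rintro htop
    rw [htop, EReal.coe_ennreal_top, EReal.top_add_coe] at h
    exact h rfl
  · exact absurd rfl h

lemma Hent_ne_bot (P : Measure α) : Hent P ≠ ⊥ := by
  unfold Hent
  split_ifs
  · exact EReal.add_ne_bot_iff.2 ⟨EReal.coe_ennreal_ne_bot _, EReal.coe_ne_bot _⟩
  · exact top_ne_bot

end Entropy

instance : IsProbabilityMeasure (volume.restrict (Ioo (0 : ℝ) 1)) :=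
  ⟨by simp⟩

def quantile (Q : Measure ℝ) (u : ℝ) : ℝ :=
  if u ∈ Ioo (0 : ℝ) 1 then sInf {x | u ≤ cdf Q x} else 0

section Quantile

variable {Q : Measure ℝ} {u x : ℝ}

lemma nonempty_setOf_le_cdf (hu : u < 1) : {x | u ≤ cdf Q x}.Nonempty :=
  ((tendsto_cdf_atTop Q).eventually (Ioi_mem_nhds hu)).exists.imp fun _ hy => le_of_lt hy

lemma bddBelow_setOf_le_cdf (hu : 0 < u) : BddBelow {x | u ≤ cdf Q x} := by
  obtain ⟨z, hz⟩ := ((tendsto_cdf_atBot Q).eventually (Iio_mem_nhds hu)).exists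
  exact ⟨z, fun y hy => le_of_not_gt fun hyz => (hy.trans ((cdf Q).mono hyz.le)).not_gt hz⟩

lemma le_cdf_quantile (hu : u ∈ Ioo (0 : ℝ) 1) : u ≤ cdf Q (quantile Q u) := by
  rw [quantile, if_pos hu]
  have hbdd := bddBelow_setOf_le_cdf (Q := Q) hu.1
  have hcl := csInf_mem_closure (nonempty_setOf_le_cdf (Q := Q) hu.2) hbdd
  have hcont : ContinuousWithinAt (cdf Q) {x | u ≤ cdf Q x} (sInf {x | u ≤ cdf Q x}) :=
    ((cdf Q).right_continuous _).mono fun y hy => csInf_le hbdd hy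
  have : (𝓝[{x | u ≤ cdf Q x}] sInf {x | u ≤ cdf Q x}).NeBot :=
    mem_closure_iff_nhdsWithin_neBot.1 hcl
  exact ge_of_tendsto hcont (eventually_mem_nhdsWithin.mono fun _ hy => hy)

lemma quantile_le_iff (hu : u ∈ Ioo (0 : ℝ) 1) : quantile Q u ≤ x ↔ u ≤ cdf Q x := by
  refine ⟨fun h => (le_cdf_quantile hu).trans ((cdf Q).mono h), fun h => ?_⟩
  rw [quantile, if_pos hu]
  exact csInf_le (bddBelow_setOf_le_cdf hu.1) h

lemma monotoneOn_quantile : MonotoneOn (quantile Q) (Ioo 0 1) :=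
  fun _ hu _ hv huv => (quantile_le_iff hu).2 (huv.trans (le_cdf_quantile hv))

lemma measurable_quantile : Measurable (quantile Q) := by
  refine measurable_of_Iic fun x => ?_
  have : quantile Q ⁻¹' Iic x = (Ioo 0 1 ∩ Iic (cdf Q x)) ∪ ((Ioo 0 1)ᶜ ∩ {_u | 0 ≤ x}) := by
    ext u
    by_cases hu : u ∈ Ioo (0 : ℝ) 1
    · simp [hu, quantile_le_iff hu]
    · simp [hu, quantile]
  rw [this]
  exact (measurableSet_Ioo.inter measurableSet_Iic).union
    (measurableSet_Ioo.compl.inter (MeasurableSet.const _))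

lemma map_restrict_Ioo_quantile [IsProbabilityMeasure Q] :
    (volume.restrict (Ioo (0 : ℝ) 1)).map (quantile Q) = Q := by
  have : IsProbabilityMeasure ((volume.restrict (Ioo (0 : ℝ) 1)).map (quantile Q)) :=
    Measure.isProbabilityMeasure_map measurable_quantile.aemeasurable
  refine Measure.ext_of_Iic _ _ fun x => ?_
  have hpre : quantile Q ⁻¹' Iic x ∩ Ioo 0 1 = Iic (cdf Q x) ∩ Ioo 0 1 := by
    ext u
    exact and_congr_left fun hu => quantile_le_iff hu
  rw [Measure.map_apply measurable_quantile measurableSet_Iic,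
    Measure.restrict_apply' measurableSet_Ioo,
    hpre, ← Measure.restrict_apply' measurableSet_Ioo, Measure.restrict_congr_set Ioo_ae_eq_Ioc,
    Measure.restrict_apply measurableSet_Iic, inter_comm, Ioc_inter_Iic, volume_Ioc,
    min_eq_right (cdf_le_one Q x), sub_zero, ofReal_cdf]

end Quantile

lemma pos_and_log_toReal_eq_neg_log_of_ofReal_mul_eq_one {a : ℝ} {b : ℝ≥0∞}
    (h : ENNReal.ofReal a * b = 1) : 0 < a ∧ log b.toReal = -log a := by
  have ha : 0 < a := by
    by_contra! ha
    rw [ENNReal.ofReal_of_nonpos ha, zero_mul] at h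
    exact zero_ne_one h
  rw [ENNReal.eq_inv_of_mul_eq_one_left ((mul_comm b _).trans h), ENNReal.toReal_inv,
    ENNReal.toReal_ofReal ha.le, log_inv]
  exact ⟨ha, rfl⟩

namespace MonotoneOn

variable {U : Set ℝ} {f : ℝ → ℝ}

lemma ae_differentiableAt_restrict (hU : IsOpen U) (hf : MonotoneOn f U) :
    ∀ᵐ x ∂volume.restrict U, DifferentiableAt ℝ f x := by
  filter_upwards [hf.ae_differentiableWithinAt hU.measurableSet,
    ae_restrict_mem hU.measurableSet] with x hx hxU
  exact hx.differentiableAt (hU.mem_nhds hxU)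

lemma restrict_inter_setOf_differentiableAt (hU : IsOpen U) (hf : MonotoneOn f U) :
    volume.restrict (U ∩ {x | DifferentiableAt ℝ f x}) = volume.restrict U := by
  rw [inter_comm, ← Measure.restrict_restrict (measurableSet_of_differentiableAt ℝ f)]
  exact Measure.restrict_eq_self_of_ae_mem (hf.ae_differentiableAt_restrict hU)

lemma map_restrict_absolutelyContinuous (hU : IsOpen U) (hf : MonotoneOn f U)
    (hfm : Measurable f) (hpos : ∀ᵐ x ∂volume.restrict U, 0 < deriv f x) :
    (volume.restrict U).map f ≪ volume := by
  set D := U ∩ {x | DifferentiableAt ℝ f x}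
  rw [← hf.restrict_inter_setOf_differentiableAt hU] at hpos ⊢
  refine Measure.AbsolutelyContinuous.mk fun A hA hA0 => ?_
  rw [Measure.map_apply hfm hA, Measure.restrict_apply (hfm hA)]
  have hB : MeasurableSet (f ⁻¹' A ∩ D) :=
    (hfm hA).inter (hU.measurableSet.inter (measurableSet_of_differentiableAt ℝ f))
  have hzero : ∫⁻ x in f ⁻¹' A ∩ D, ENNReal.ofReal (deriv f x) = 0 := by
    rw [lintegral_deriv_eq_volume_image_of_monotoneOn hB
      (fun x hx => hx.2.2.hasDerivAt.hasDerivWithinAt) (hf.mono fun x hx => hx.2.1)]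
    exact measure_mono_null (image_subset_iff.2 inter_subset_left) hA0
  rw [lintegral_eq_zero_iff (measurable_deriv f).ennreal_ofReal] at hzero
  have : ∀ᵐ x ∂volume.restrict (f ⁻¹' A ∩ D), False := by
    filter_upwards [hzero, ae_restrict_of_ae_restrict_of_subset inter_subset_right hpos]
      with x h0 hx
    exact (ENNReal.ofReal_pos.2 hx).ne' h0
  exact Measure.restrict_eq_zero.1 (ae_eq_bot.1 (eventually_false_iff_eq_bot.1 this))

lemma ae_ofReal_deriv_mul_rnDeriv_map (hU : IsOpen U) (hU' : volume U ≠ ∞)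
    (hf : MonotoneOn f U) (hac : (volume.restrict U).map f ≪ volume) :
    ∀ᵐ x ∂volume.restrict U,
      ENNReal.ofReal (deriv f x) * ((volume.restrict U).map f).rnDeriv volume (f x) = 1 := by
  -- By change of variables `∫_B f' ρ(f) = P(f '' B) ≥ |B|` for every `B`, while the total
  -- integral is at most `P(univ) = |U|`; no injectivity of `f` is needed.
  have hfm : AEMeasurable f (volume.restrict U) :=
    aemeasurable_restrict_of_monotoneOn hU.measurableSet hf
  rw [← hf.restrict_inter_setOf_differentiableAt hU] at hac hfm ⊢
  set D := U ∩ {x | DifferentiableAt ℝ f x}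
  have hD : MeasurableSet D := hU.measurableSet.inter (measurableSet_of_differentiableAt ℝ f)
  set ρ := ((volume.restrict D).map f).rnDeriv volume
  have hfinite : volume.restrict D univ ≠ ∞ := by
    rw [Measure.restrict_apply_univ]
    exact ne_top_of_le_ne_top hU' (measure_mono inter_subset_left)
  have hcov : ∀ B ⊆ D, MeasurableSet B →
      ∫⁻ x in B, ENNReal.ofReal (deriv f x) * ρ (f x) = (volume.restrict D).map f (f '' B) :=
    fun B hBD hB => by
      rw [← lintegral_image_eq_lintegral_deriv_mul_of_monotoneOn hB
        (fun x hx => (hBD hx).2.hasDerivAt.hasDerivWithinAt)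
        (hf.mono fun x hx => (hBD hx).1), Measure.setLIntegral_rnDeriv hac]
  have hge : (fun _ => 1) ≤ᵐ[volume.restrict D] fun x => ENNReal.ofReal (deriv f x) * ρ (f x) := by
    refine ae_le_of_forall_setLIntegral_le_of_sigmaFinite measurable_const fun B hB _ => ?_
    rw [Measure.restrict_restrict hB, setLIntegral_const, one_mul,
      hcov _ inter_subset_right (hB.inter hD)]
    calc volume (B ∩ D) = volume.restrict D (B ∩ D) := by
          rw [Measure.restrict_apply (hB.inter hD), inter_assoc, inter_self]
      _ ≤ _ := Measure.le_map_apply_image hfm _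
  have hle : ∫⁻ x, ENNReal.ofReal (deriv f x) * ρ (f x) ∂volume.restrict D
      ≤ ∫⁻ _, 1 ∂volume.restrict D := by
    rw [hcov D subset_rfl hD, lintegral_one]
    refine (measure_mono (subset_univ _)).trans_eq ?_
    rw [Measure.map_apply_of_aemeasurable hfm MeasurableSet.univ, preimage_univ]
  filter_upwards [(ae_eq_of_ae_le_of_lintegral_le hge (by simpa using hfinite)
    ((measurable_deriv f).ennreal_ofReal.aemeasurable.mul
      ((Measure.measurable_rnDeriv _ _).comp_aemeasurable hfm)) hle)] with x hx
  exact hx.symm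

lemma ae_log_rnDeriv_map (hU : IsOpen U) (hU' : volume U ≠ ∞) (hf : MonotoneOn f U)
    (hac : (volume.restrict U).map f ≪ volume) :
    ∀ᵐ x ∂volume.restrict U, 0 < deriv f x ∧
      log (((volume.restrict U).map f).rnDeriv volume (f x)).toReal = -log (deriv f x) :=
  (hf.ae_ofReal_deriv_mul_rnDeriv_map hU hU' hac).mono fun _ =>
    pos_and_log_toReal_eq_neg_log_of_ofReal_mul_eq_one

lemma Hent_map_eq_neg_integral_log_deriv (hU : IsOpen U) (hU' : volume U ≠ ∞)
    (hf : MonotoneOn f U) (hac : (volume.restrict U).map f ≪ volume)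
    (hint : Integrable (fun x => log (deriv f x)) (volume.restrict U)) :
    Hent ((volume.restrict U).map f)
      = ((-∫ x, log (deriv f x) ∂volume.restrict U : ℝ) : EReal) := by
  have : IsFiniteMeasure (volume.restrict U) := isFiniteMeasure_restrict.2 hU'
  have hfm := aemeasurable_restrict_of_monotoneOn (μ := volume) hU.measurableSet hf
  have hlog := hf.ae_log_rnDeriv_map hU hU' hac
  have hmeas := (measurable_log_rnDeriv ((volume.restrict U).map f)).aestronglyMeasurable
    (μ := (volume.restrict U).map f)
  rw [Hent_eq_integral_log_rnDeriv hac ((integrable_map_measure hmeas hfm).2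
      (hint.neg.congr (hlog.mono fun x hx => hx.2.symm))),
    integral_map hfm hmeas, integral_congr_ae (hlog.mono fun x hx => hx.2), integral_neg]

lemma absolutelyContinuous_and_integrable_of_Hent_map_ne_top (hU : IsOpen U) (hU' : volume U ≠ ∞)
    (hf : MonotoneOn f U) (h : Hent ((volume.restrict U).map f) ≠ ⊤) :
    (volume.restrict U).map f ≪ volume ∧
      Integrable (fun x => log (deriv f x)) (volume.restrict U) := by
  have : IsFiniteMeasure (volume.restrict U) := isFiniteMeasure_restrict.2 hU'
  obtain ⟨hac, hint⟩ := absolutelyContinuous_and_integrable_of_Hent_ne_top h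
  have hfm := aemeasurable_restrict_of_monotoneOn (μ := volume) hU.measurableSet hf
  have hmeas := (measurable_log_rnDeriv ((volume.restrict U).map f)).aestronglyMeasurable
    (μ := (volume.restrict U).map f)
  refine ⟨hac, ((integrable_map_measure hmeas hfm).1 hint).neg.congr ?_⟩
  filter_upwards [hf.ae_log_rnDeriv_map hU hU' hac] with x hx
  simp [hx.2]

end MonotoneOn

lemma Hent_eq_neg_integral_log_deriv_quantile {Q : Measure ℝ} [IsProbabilityMeasure Q]
    (hQ : Hent Q ≠ ⊤) :
    (∀ᵐ u ∂volume.restrict (Ioo (0 : ℝ) 1), 0 < deriv (quantile Q) u) ∧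
      Integrable (fun u => log (deriv (quantile Q) u)) (volume.restrict (Ioo (0 : ℝ) 1)) ∧
      Hent Q = ((-∫ u in Ioo (0 : ℝ) 1, log (deriv (quantile Q) u) : ℝ) : EReal) := by
  have hU' : volume (Ioo (0 : ℝ) 1) ≠ ∞ := by simp
  rw [← map_restrict_Ioo_quantile (Q := Q)] at hQ
  obtain ⟨hac, hint⟩ :=
    monotoneOn_quantile.absolutelyContinuous_and_integrable_of_Hent_map_ne_top isOpen_Ioo hU' hQ
  refine ⟨(monotoneOn_quantile.ae_log_rnDeriv_map isOpen_Ioo hU' hac).mono fun _ h => h.1, hint, ?_⟩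
  rw [← monotoneOn_quantile.Hent_map_eq_neg_integral_log_deriv isOpen_Ioo hU' hac hint,
    map_restrict_Ioo_quantile]

section WeightedLog

variable {ι : Type*} {s : Finset ι} {t d : ι → ℝ}

lemma sum_mul_log_le_log_sum_mul (ht : ∀ i ∈ s, 0 ≤ t i) (hsum : ∑ i ∈ s, t i = 1)
    (hd : ∀ i ∈ s, 0 < d i) : ∑ i ∈ s, t i * log (d i) ≤ log (∑ i ∈ s, t i * d i) :=
  strictConcaveOn_log_Ioi.concaveOn.le_map_sum ht hsum hd

lemma log_sum_mul_le_sum_abs_log (ht : ∀ i ∈ s, 0 ≤ t i) (hsum : ∑ i ∈ s, t i = 1)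
    (hd : ∀ i ∈ s, 0 < d i) : log (∑ i ∈ s, t i * d i) ≤ ∑ i ∈ s, |log (d i)| := by
  rcases (Finset.sum_nonneg fun i hi => mul_nonneg (ht i hi) (hd i hi).le).eq_or_lt with h0 | hpos
  · rw [← h0, log_zero]
    exact Finset.sum_nonneg fun i _ => abs_nonneg _
  rw [log_le_iff_le_exp hpos]
  calc ∑ i ∈ s, t i * d i ≤ ∑ i ∈ s, t i * exp (∑ j ∈ s, |log (d j)|) := by
        refine Finset.sum_le_sum fun i hi => mul_le_mul_of_nonneg_left ?_ (ht i hi)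
        calc d i = exp (log (d i)) := (exp_log (hd i hi)).symm
          _ ≤ exp (∑ j ∈ s, |log (d j)|) := exp_le_exp.2 ((le_abs_self _).trans
            (Finset.single_le_sum (f := fun j => |log (d j)|) (fun j _ => abs_nonneg _) hi))
    _ = exp (∑ j ∈ s, |log (d j)|) := by rw [← Finset.sum_mul, hsum, one_mul]

end WeightedLog

lemma EReal.coe_finsetSum {ι : Type*} (s : Finset ι) (f : ι → ℝ) :
    ((∑ i ∈ s, f i : ℝ) : EReal) = ∑ i ∈ s, (f i : EReal) :=
  map_sum (⟨⟨Real.toEReal, EReal.coe_zero⟩, EReal.coe_add⟩ : ℝ →+ EReal) f s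

lemma EReal.sum_eq_top_of_mem {ι : Type*} {s : Finset ι} {f : ι → EReal} {i : ι} (hi : i ∈ s)
    (htop : f i = ⊤) (hbot : ∀ j ∈ s, f j ≠ ⊥) : ∑ j ∈ s, f j = ⊤ := by
  rw [← Finset.add_sum_erase _ _ hi, htop]
  exact EReal.top_add_of_ne_bot (WithBot.sum_eq_bot_iff.not.2 fun ⟨j, hj, h⟩ =>
    hbot j (Finset.mem_of_mem_erase hj) h)

lemma sum_mul_Hent_eq_top {ι α : Type*} [MeasureSpace α] {s : Finset ι} {t : ι → ℝ}
    {Q : ι → Measure α} {i : ι} (ht : ∀ j ∈ s, 0 ≤ t j) (hi : i ∈ s) (hti : 0 < t i)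
    (htop : Hent (Q i) = ⊤) : ∑ j ∈ s, ((t j : ℝ) : EReal) * Hent (Q j) = ⊤ :=
  EReal.sum_eq_top_of_mem hi (by rw [htop, EReal.coe_mul_top_of_pos hti]) fun j hj =>
    (EReal.mul_ne_bot _ _).2 ⟨.inl (EReal.coe_ne_bot _), .inr (Hent_ne_bot _),
      .inl (EReal.coe_ne_top _), .inl (EReal.coe_nonneg.2 (ht j hj))⟩

theorem Hent_map_sum_mul_quantile_le {ι : Type*} (s : Finset ι) (Q : ι → Measure ℝ)
    [∀ i, IsProbabilityMeasure (Q i)] (t : ι → ℝ) (ht : ∀ i ∈ s, 0 < t i)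
    (hsum : ∑ i ∈ s, t i = 1) (hQ : ∀ i ∈ s, Hent (Q i) ≠ ⊤) :
    Hent ((volume.restrict (Ioo (0 : ℝ) 1)).map fun u => ∑ i ∈ s, t i * quantile (Q i) u)
      ≤ ∑ i ∈ s, ((t i : ℝ) : EReal) * Hent (Q i) := by
  set μ := volume.restrict (Ioo (0 : ℝ) 1)
  set S := fun u => ∑ i ∈ s, t i * quantile (Q i) u
  have hU' : volume (Ioo (0 : ℝ) 1) ≠ ∞ := by simp
  have hq := fun i (hi : i ∈ s) => Hent_eq_neg_integral_log_deriv_quantile (hQ i hi)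
  have hpos : ∀ᵐ u ∂μ, ∀ i ∈ s, 0 < deriv (quantile (Q i)) u :=
    (eventually_all_finset s).2 fun i hi => (hq i hi).1
  have hderiv : ∀ᵐ u ∂μ, deriv S u = ∑ i ∈ s, t i * deriv (quantile (Q i)) u := by
    filter_upwards [(eventually_all_finset s).2 fun i _ =>
      monotoneOn_quantile.ae_differentiableAt_restrict isOpen_Ioo] with u hu
    exact (HasDerivAt.fun_sum fun i hi => (hu i hi).hasDerivAt.const_mul (t i)).deriv
  have hSmono : MonotoneOn S (Ioo 0 1) := fun u hu v hv huv =>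
    Finset.sum_le_sum fun i hi =>
      mul_le_mul_of_nonneg_left (monotoneOn_quantile hu hv huv) (ht i hi).le
  have hac : μ.map S ≪ volume := by
    refine hSmono.map_restrict_absolutelyContinuous isOpen_Ioo
      (Finset.measurable_sum _ fun i _ => measurable_quantile.const_mul _) ?_
    have hne : s.Nonempty := Finset.nonempty_of_sum_ne_zero (hsum ▸ one_ne_zero)
    filter_upwards [hderiv, hpos] with u hS hq
    rw [hS]
    exact Finset.sum_pos (fun i hi => mul_pos (ht i hi) (hq i hi)) hne
  have hbounds : ∀ᵐ u ∂μ, ∑ i ∈ s, t i * log (deriv (quantile (Q i)) u) ≤ log (deriv S u) ∧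
      log (deriv S u) ≤ ∑ i ∈ s, |log (deriv (quantile (Q i)) u)| := by
    filter_upwards [hderiv, hpos] with u hS hq
    rw [hS]
    exact ⟨sum_mul_log_le_log_sum_mul (fun i hi => (ht i hi).le) hsum hq,
      log_sum_mul_le_sum_abs_log (fun i hi => (ht i hi).le) hsum hq⟩
  have hlower : Integrable (fun u => ∑ i ∈ s, t i * log (deriv (quantile (Q i)) u)) μ :=
    integrable_finsetSum _ fun i hi => (hq i hi).2.1.const_mul _
  have hint : Integrable (fun u => log (deriv S u)) μ :=
    integrable_of_le_of_le (measurable_deriv S).log.aestronglyMeasurable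
      (hbounds.mono fun _ h => h.1) (hbounds.mono fun _ h => h.2) hlower
      (integrable_finsetSum _ fun i hi => (hq i hi).2.1.abs)
  rw [hSmono.Hent_map_eq_neg_integral_log_deriv isOpen_Ioo hU' hac hint]
  calc ((-∫ u, log (deriv S u) ∂μ : ℝ) : EReal)
      ≤ ((-∫ u, ∑ i ∈ s, t i * log (deriv (quantile (Q i)) u) ∂μ : ℝ) : EReal) :=
        EReal.coe_le_coe_iff.2 <| neg_le_neg <|
          integral_mono_ae hlower hint (hbounds.mono fun _ h => h.1)
    _ = ∑ i ∈ s, ((t i : ℝ) : EReal) * Hent (Q i) := by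
        rw [integral_finsetSum _ fun i hi => (hq i hi).2.1.const_mul _, ← Finset.sum_neg_distrib,
          EReal.coe_finsetSum]
        refine Finset.sum_congr rfl fun i hi => ?_
        rw [(hq i hi).2.2, ← EReal.coe_mul, integral_const_mul, mul_neg]

theorem stmt_19_general (n : ℕ) (Q : Fin n → Measure ℝ)
    (hQ : ∀ i, IsProbabilityMeasure (Q i))
    (t : Fin n → ℝ) (ht0 : ∀ i, 0 ≤ t i)
    (hsum : ∑ i, t i = 1) :
    ∃ μ : Measure (Fin n → ℝ), IsProbabilityMeasure μ ∧
      (∀ i, μ.map (fun x => x i) = Q i) ∧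
      Hent (μ.map fun x => ∑ i, t i * x i) ≤ ∑ i, ((t i : ℝ) : EReal) * Hent (Q i) := by
  set s := Finset.univ.filter fun i => t i ≠ 0
  have hpos : ∀ i ∈ s, 0 < t i := fun i hi => (ht0 i).lt_of_ne (Finset.mem_filter.1 hi).2.symm
  have hΦ : Measurable fun u i => quantile (Q i) u :=
    measurable_pi_lambda _ fun _ => measurable_quantile
  refine ⟨(volume.restrict (Ioo (0 : ℝ) 1)).map fun u i => quantile (Q i) u,
    Measure.isProbabilityMeasure_map hΦ.aemeasurable, fun i => ?_, ?_⟩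
  · rw [Measure.map_map (measurable_pi_apply i) hΦ]
    exact map_restrict_Ioo_quantile
  have hS : ((fun x => ∑ i, t i * x i) ∘ fun u i => quantile (Q i) u)
      = fun u => ∑ i ∈ s, t i * quantile (Q i) u :=
    funext fun u => (Finset.sum_filter_of_ne fun i _ h => left_ne_zero_of_mul h).symm
  have hRHS : ∑ i, ((t i : ℝ) : EReal) * Hent (Q i) = ∑ i ∈ s, ((t i : ℝ) : EReal) * Hent (Q i) :=
    (Finset.sum_filter_of_ne (p := fun i => t i ≠ 0) fun i _ h ht =>
      h (by rw [ht, EReal.coe_zero, zero_mul])).symm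
  rw [Measure.map_map (by fun_prop) hΦ, hS, hRHS]
  by_cases htop : ∃ i ∈ s, Hent (Q i) = ⊤
  · obtain ⟨i, hi, hi'⟩ := htop
    rw [sum_mul_Hent_eq_top (fun j hj => (hpos j hj).le) hi (hpos i hi) hi']
    exact le_top
  · exact Hent_map_sum_mul_quantile_le s Q t hpos (by rwa [Finset.sum_filter_ne_zero])
      fun i hi h => htop ⟨i, hi, h⟩

/-- Lemma 4.1: displacement convexity of the differential entropy.
There is a coupling `μ` of `Q₁,…,Qₙ` (the joint law of a random vector `X` with
`Xᵢ ∼ Qᵢ`) such that `H(Law(Σᵢ tᵢ Xᵢ)) ≤ Σᵢ tᵢ H(Qᵢ)`. -/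
theorem stmt_19 (n : ℕ) (Q : Fin n → Measure ℝ)
    (hQ : ∀ i, IsProbabilityMeasure (Q i))
    (t : Fin n → ℝ) (ht0 : ∀ i, 0 ≤ t i) (ht1 : ∀ i, t i ≤ 1)
    (hsum : ∑ i, t i = 1) :
    ∃ μ : Measure (Fin n → ℝ), IsProbabilityMeasure μ ∧
      (∀ i, μ.map (fun x => x i) = Q i) ∧
      Hent (μ.map fun x => ∑ i, t i * x i) ≤ ∑ i, ((t i : ℝ) : EReal) * Hent (Q i) :=
  stmt_19_general n Q hQ t ht0 hsum

end
end
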